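/- Let k be a positive integer. If X is an S(2k-1)-space, then |X| ≤ 2^{c_{2k-1}(X)·χ_{2k-1}(X)}. -/

import Mathlib

open Cardinal Set

universe u

variable {X : Type u}

/-- `x` is S(n)-separated from `A`. -/
def SSep [TopologicalSpace X] : ℕ → X → Set X → Prop
  | 0, x, A => x ∉ closure A
  | (n+1), x, A => ∃ U : ℕ → Set X, (∀ i ≤ n, IsOpen (U i)) ∧ x ∈ U 0 ∧
      (∀ i < n, closure (U i) ⊆ U (i+1)) ∧ closure (U n) ∩ A = ∅

/-- `X` is an S(n)-space. -/
def SSpace (n : ℕ) (X : Type u) [TopologicalSpace X] : Prop :=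
  ∀ x y : X, x ≠ y → SSep n x {y}

/-- `U` is an S(2k-1)-neighborhood of `x` (for `k ≥ 1`). -/
def SOddNhd [TopologicalSpace X] (k : ℕ) (x : X) (U : Set X) : Prop :=
  ∃ V : ℕ → Set X, (∀ i < k, IsOpen (V i)) ∧ x ∈ V 0 ∧
    (∀ i, i + 1 < k → closure (V i) ⊆ V (i+1)) ∧ V (k-1) ⊆ U

/-- `U` is an S(2k)-neighborhood of `x` (for `k ≥ 1`). -/
def SEvenNhd [TopologicalSpace X] (k : ℕ) (x : X) (U : Set X) : Prop :=
  ∃ V : ℕ → Set X, (∀ i < k, IsOpen (V i)) ∧ x ∈ V 0 ∧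
    (∀ i, i + 1 < k → closure (V i) ⊆ V (i+1)) ∧ closure (V (k-1)) ⊆ U

/-- `U` is an open S(2k-1)-neighborhood of `x`. -/
def SOpenNhd [TopologicalSpace X] (k : ℕ) (x : X) (U : Set X) : Prop :=
  IsOpen U ∧ SOddNhd k x U

/-- `U` is an S(2k-1)-open set. -/
def SOpen [TopologicalSpace X] (k : ℕ) (U : Set X) : Prop :=
  IsOpen U ∧ ∃ x, SOddNhd k x U

/-- The S(2k-1)-closure `θ_{2k-1}(A)`. -/
def thetaOdd [TopologicalSpace X] (k : ℕ) (A : Set X) : Set X :=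
  {x | ∀ U : Set X, SOpenNhd k x U → (U ∩ A).Nonempty}

/-- The S(2k)-closure `θ_{2k}(A)`. -/
def thetaEven [TopologicalSpace X] (k : ℕ) (A : Set X) : Set X :=
  {x | ∀ U : Set X, SOpenNhd k x U → (closure U ∩ A).Nonempty}

/-- `D` is S(2k-1)-discrete. -/
def SOddDiscrete [TopologicalSpace X] (k : ℕ) (D : Set X) : Prop :=
  ∀ x ∈ D, ∃ U : Set X, SOpenNhd k x U ∧ U ∩ D = {x}

/-- `D` is S(2k)-discrete. -/
def SEvenDiscrete [TopologicalSpace X] (k : ℕ) (D : Set X) : Prop :=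
  ∀ x ∈ D, ∃ U : Set X, SOpenNhd k x U ∧ closure U ∩ D = {x}

/-- The S(2k-1)-spread `s_{2k-1}(X)`. -/
noncomputable def spreadOdd (k : ℕ) (X : Type u) [TopologicalSpace X] : Cardinal :=
  (⨆ D : {D : Set X // SOddDiscrete k D}, #D.1) ⊔ Cardinal.aleph0

/-- The S(2k)-spread `s_{2k}(X)`. -/
noncomputable def spreadEven (k : ℕ) (X : Type u) [TopologicalSpace X] : Cardinal :=
  (⨆ D : {D : Set X // SEvenDiscrete k D}, #D.1) ⊔ Cardinal.aleph0

/-- The S(2k-1)-cellularity `c_{2k-1}(X)`. -/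
noncomputable def cellOdd (k : ℕ) (X : Type u) [TopologicalSpace X] : Cardinal :=
  (⨆ F : {F : Set (Set X) // (∀ U ∈ F, SOpen k U ∧ U.Nonempty) ∧
      (∀ U ∈ F, ∀ V ∈ F, U ≠ V → U ∩ V = ∅)}, #F.1) ⊔ Cardinal.aleph0

/-- The S(2k)-cellularity `c_{2k}(X)`. -/
noncomputable def cellEven (k : ℕ) (X : Type u) [TopologicalSpace X] : Cardinal :=
  (⨆ F : {F : Set (Set X) // (∀ U ∈ F, SOpen k U ∧ U.Nonempty) ∧
      (∀ U ∈ F, ∀ V ∈ F, U ≠ V → closure U ∩ closure V = ∅)}, #F.1) ⊔ Cardinal.aleph0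

/-- The S(2k-1)-character `χ_{2k-1}(X)`. -/
noncomputable def charOdd (k : ℕ) (X : Type u) [TopologicalSpace X] : Cardinal :=
  sInf {c | Cardinal.aleph0 ≤ c ∧ ∀ x : X, ∃ B : Set (Set X), #B ≤ c ∧
    (∀ U ∈ B, SOpenNhd k x U) ∧
    ∀ U : Set X, SOpenNhd k x U → ∃ V ∈ B, V ⊆ U}

/-- The S(2k)-character `χ_{2k}(X)`. -/
noncomputable def charEven (k : ℕ) (X : Type u) [TopologicalSpace X] : Cardinal :=
  sInf {c | Cardinal.aleph0 ≤ c ∧ ∀ x : X, ∃ B : Set (Set X), #B ≤ c ∧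
    (∀ V ∈ B, IsClosed V ∧ SOddNhd k x V) ∧
    ∀ W : Set X, SOpenNhd k x W → ∃ V ∈ B, V ⊆ closure W}

/-- The S(2k-1)-pseudocharacter `ψ_{2k-1}(X)`. -/
noncomputable def psiOdd (k : ℕ) (X : Type u) [TopologicalSpace X] : Cardinal :=
  sInf {c | Cardinal.aleph0 ≤ c ∧ ∀ x : X, ∃ B : Set (Set X), #B ≤ c ∧
    (∀ U ∈ B, SOpenNhd k x U) ∧ ⋂₀ B = {x}}

/-- The S(2k)-pseudocharacter `ψ_{2k}(X)`. -/
noncomputable def psiEven (k : ℕ) (X : Type u) [TopologicalSpace X] : Cardinal :=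
  sInf {c | Cardinal.aleph0 ≤ c ∧ ∀ x : X, ∃ B : Set (Set X), #B ≤ c ∧
    (∀ U ∈ B, SOpenNhd k x U) ∧ (⋂ U ∈ B, closure U) = {x}}

/-- The usual pseudocharacter `ψ(X)`. -/
noncomputable def psi (X : Type u) [TopologicalSpace X] : Cardinal :=
  sInf {c | Cardinal.aleph0 ≤ c ∧ ∀ x : X, ∃ B : Set (Set X), #B ≤ c ∧
    (∀ U ∈ B, IsOpen U) ∧ ⋂₀ B = {x}}

/-!
This is the Pol–Šapirovskii closing-off argument. Put `κ = c_{2k-1}(X) · χ_{2k-1}(X)` and fix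
local bases `B x` of open S(2k-1)-neighbourhoods with `|B x| ≤ χ_{2k-1}(X)`. A transfinite
construction of length `κ⁺` yields `H` with `|H| ≤ 2^κ` such that, whenever the S(2k-1)-closures
of the unions of at most `κ` families of basic sets at `≤ κ` points of `H` do not cover `X`, they
do not cover `H` either. If some `q ∉ H`, the S(2k-1)-separation gives disjoint basic
`V x ∋ x` and `W x ∋ q` for `x ∈ H`. Grouping `H` by `W x ∈ B q` and taking, in each group, a
maximal disjoint family of neighbourhoods inside the `V x` (of size at most the cellularity),
we get such families covering `H` but missing `q`, which contradicts the choice of `H`.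
-/

theorem Cardinal.mk_bounded_subset_le_two_power {α : Type u} {κ : Cardinal.{u}} (hκ : ℵ₀ ≤ κ)
    {S : Set α} (hS : #S ≤ 2 ^ κ) : #{A : Set α // A ⊆ S ∧ #A ≤ κ} ≤ 2 ^ κ :=
  calc #{A : Set α // A ⊆ S ∧ #A ≤ κ} ≤ max #S ℵ₀ ^ κ := mk_bounded_subset_le S κ
    _ ≤ (2 ^ κ) ^ κ := power_le_power_right (max_le hS (hκ.trans (cantor κ).le))
    _ = 2 ^ κ := by rw [← power_mul, mul_eq_self hκ]

section ClosingOff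

variable {X : Type u} (κ : Cardinal.{u}) (F : Set X → Set X)

def closingOffStep (S : Set X) : Set X :=
  S ∪ ⋃ A ∈ {A : Set X | A ⊆ S ∧ #A ≤ κ}, F A

noncomputable def closingOffChain (o : Ordinal.{u}) : Set X :=
  closingOffStep κ F (⋃ j < o, closingOffChain j)
termination_by o

theorem closingOffChain_eq (o : Ordinal.{u}) :
    closingOffChain κ F o = closingOffStep κ F (⋃ j < o, closingOffChain κ F j) := by
  rw [closingOffChain]

variable {κ F}

theorem mk_closingOffStep_le (hκ : ℵ₀ ≤ κ) (hF : ∀ A : Set X, #A ≤ κ → #(F A) ≤ 2 ^ κ)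
    {S : Set X} (hS : #S ≤ 2 ^ κ) : #(closingOffStep κ F S) ≤ 2 ^ κ := by
  have h2κ : ℵ₀ ≤ 2 ^ κ := hκ.trans (cantor κ).le
  refine (mk_union_le _ _).trans (add_le_of_le h2κ hS ?_)
  exact (mk_biUnion_le _ _).trans (mul_le_of_le h2κ (mk_bounded_subset_le_two_power hκ hS)
    (ciSup_le' fun A => hF A A.2.2))

theorem mk_closingOffChain_le (hκ : ℵ₀ ≤ κ) (hF : ∀ A : Set X, #A ≤ κ → #(F A) ≤ 2 ^ κ)
    {o : Ordinal.{u}} (ho : o.card ≤ 2 ^ κ) : #(closingOffChain κ F o) ≤ 2 ^ κ := by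
  induction o using WellFoundedLT.induction with
  | _ o ih =>
    rw [closingOffChain_eq]
    exact mk_closingOffStep_le hκ hF <| mk_biUnion_le_of_le ho (hκ.trans (cantor κ).le) _
      fun j hj => ih j hj ((Ordinal.card_le_card hj.le).trans ho)

/-- The closing-off lemma: the union of the first `κ⁺` stages of the chain works, since by
regularity of `κ⁺` every set of size `κ` in it already lies below some stage. -/
theorem exists_mk_le_two_power_forall_subset (hκ : ℵ₀ ≤ κ)
    (hF : ∀ A : Set X, #A ≤ κ → #(F A) ≤ 2 ^ κ) :
    ∃ H : Set X, #H ≤ 2 ^ κ ∧ ∀ A ⊆ H, #A ≤ κ → F A ⊆ H := by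
  have hsucc : (Order.succ κ).ord.card ≤ 2 ^ κ := by
    simpa using Order.succ_le_of_lt (cantor κ)
  refine ⟨⋃ j < (Order.succ κ).ord, closingOffChain κ F j,
    mk_biUnion_le_of_le hsucc (hκ.trans (cantor κ).le) _
      fun j hj => mk_closingOffChain_le hκ hF ((Ordinal.card_le_card hj.le).trans hsucc), ?_⟩
  intro A hA hAκ
  have hmem : ∀ a : A, ∃ j < (Order.succ κ).ord, (a : X) ∈ closingOffChain κ F j := by
    simpa using fun a : A => hA a.2
  choose j hjo hj using hmem
  have hγ : ⨆ a, j a + 1 < (Order.succ κ).ord := by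
    refine Ordinal.iSup_add_one_lt_of_lt_cof ?_ hjo
    rw [(isRegular_succ hκ).cof_ord]
    exact hAκ.trans_lt (Order.lt_succ κ)
  have hAγ : A ⊆ ⋃ i < ⨆ a, j a + 1, closingOffChain κ F i := fun a ha =>
    mem_iUnion₂.2 ⟨j ⟨a, ha⟩, (Order.lt_add_one_iff.2 le_rfl).trans_le
      (Ordinal.le_iSup (fun a => j a + 1) ⟨a, ha⟩), hj ⟨a, ha⟩⟩
  intro x hx
  refine mem_iUnion₂.2 ⟨_, hγ, ?_⟩
  rw [closingOffChain_eq]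
  exact Or.inr (mem_biUnion (x := A) ⟨hAγ, hAκ⟩ hx)

theorem exists_mk_le_two_power_forall_eq_univ (hκ : ℵ₀ ≤ κ) (R : Set X → Set (Set X))
    (hR : ∀ A : Set X, #A ≤ κ → #(R A) ≤ 2 ^ κ) :
    ∃ H : Set X, #H ≤ 2 ^ κ ∧ ∀ A ⊆ H, #A ≤ κ → ∀ S ∈ R A, H ⊆ S → S = Set.univ := by
  have h2κ : ℵ₀ ≤ 2 ^ κ := hκ.trans (cantor κ).le
  have hpick : ∀ S : Set X, ∃ P ⊆ Sᶜ, #P ≤ 1 ∧ (Sᶜ.Nonempty → P.Nonempty) := by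
    intro S
    rcases Sᶜ.eq_empty_or_nonempty with hS | ⟨x, hx⟩
    · exact ⟨∅, empty_subset _, by simp, by simp [hS]⟩
    · exact ⟨{x}, singleton_subset_iff.2 hx, by simp, fun _ => singleton_nonempty x⟩
  choose P hPS hP1 hPne using hpick
  obtain ⟨H, hHκ, hH⟩ := exists_mk_le_two_power_forall_subset (F := fun A => ⋃ S ∈ R A, P S) hκ
    fun A hA => (mk_biUnion_le _ _).trans <| mul_le_of_le h2κ (hR A hA)
      (ciSup_le' fun S => (hP1 S).trans (one_le_aleph0.trans h2κ))
  refine ⟨H, hHκ, fun A hAH hA S hS hHS => by_contra fun hne => ?_⟩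
  obtain ⟨x, hx⟩ := hPne S (nonempty_compl.2 hne)
  exact hPS S hx (hHS (hH A hAH hA (mem_biUnion hS hx)))

end ClosingOff

theorem exists_maximal_pairwiseDisjoint {α : Type*} (G : Set (Set α)) :
    ∃ 𝒰 ⊆ G, 𝒰.PairwiseDisjoint id ∧ ∀ U ∈ G, (∀ V ∈ 𝒰, Disjoint U V) → U ∈ 𝒰 := by
  obtain ⟨𝒰, ⟨h𝒰G, h𝒰⟩, hmax⟩ := zorn_subset {𝒰 | 𝒰 ⊆ G ∧ 𝒰.PairwiseDisjoint id}
    fun c hcS hc => ⟨⋃₀ c, ⟨sUnion_subset fun _ hs => (hcS hs).1,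
      (hc.pairwiseDisjoint_sUnion id).2 fun _ hs => (hcS hs).2⟩,
      fun _ hs => subset_sUnion_of_mem hs⟩
  refine ⟨𝒰, h𝒰G, h𝒰, fun U hU hdisj => ?_⟩
  refine hmax ⟨insert_subset hU h𝒰G, h𝒰.insert fun V hV _ => hdisj V hV⟩ (subset_insert U 𝒰)
    (mem_insert U 𝒰)

section SOdd

variable {X : Type u} [TopologicalSpace X] {k : ℕ}

theorem SOddNhd.mem (hk : 1 ≤ k) {x : X} {U : Set X} (h : SOddNhd k x U) : x ∈ U := by
  obtain ⟨V, -, hx, hV, hVU⟩ := h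
  suffices ∀ i < k, x ∈ V i from hVU (this (k - 1) (by omega))
  intro i hi
  induction i with
  | zero => exact hx
  | succ i ih => exact hV i hi (subset_closure (ih (by omega)))

theorem SOpenNhd.mem (hk : 1 ≤ k) {x : X} {U : Set X} (h : SOpenNhd k x U) : x ∈ U :=
  h.2.mem hk

theorem SOpenNhd.inter {x : X} {U U' : Set X} (h : SOpenNhd k x U) (h' : SOpenNhd k x U') :
    SOpenNhd k x (U ∩ U') := by
  obtain ⟨hU, V, hV, hx, hVV, hVU⟩ := h
  obtain ⟨hU', V', hV', hx', hVV', hVU'⟩ := h'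
  exact ⟨hU.inter hU', fun i => V i ∩ V' i, fun i hi => (hV i hi).inter (hV' i hi), ⟨hx, hx'⟩,
    fun i hi => (closure_inter_subset_inter_closure _ _).trans
      (inter_subset_inter (hVV i hi) (hVV' i hi)), inter_subset_inter hVU hVU'⟩

theorem notMem_thetaOdd_iff {x : X} {A : Set X} :
    x ∉ thetaOdd k A ↔ ∃ U, SOpenNhd k x U ∧ Disjoint U A := by
  simp [thetaOdd, not_nonempty_iff_eq_empty, disjoint_iff_inter_eq_empty]

/-- The chain of an S(2k-1)-separation of `x` from `y` splits at its middle term `U (k - 1)`: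
the first half is a chain around `x`, the complements of the closures of the second half,
read backwards, are a chain around `y`. -/
theorem SSpace.exists_disjoint_sOpenNhd (hk : 1 ≤ k) (h : SSpace (2 * k - 1) X) {x y : X}
    (hxy : x ≠ y) : ∃ U W, SOpenNhd k x U ∧ SOpenNhd k y W ∧ Disjoint U W := by
  obtain ⟨m, rfl⟩ : ∃ m, k = m + 1 := ⟨k - 1, by omega⟩
  have hsep := h x y hxy
  rw [show 2 * (m + 1) - 1 = 2 * m + 1 by omega] at hsep
  obtain ⟨U, hU, hx, hUU, hy⟩ := hsep
  refine ⟨U m, (closure (U m))ᶜ, ⟨hU m (by omega), U, fun i hi => hU i (by omega), hx,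
    fun i hi => hUU i (by omega), by simp⟩, ⟨isClosed_closure.isOpen_compl,
    fun i => (closure (U (2 * m - i)))ᶜ, fun i _ => isClosed_closure.isOpen_compl, ?_, ?_, ?_⟩,
    disjoint_compl_right.mono_right (compl_subset_compl.2 subset_closure)⟩
  · simpa using fun hy' => eq_empty_iff_forall_notMem.1 hy y ⟨hy', rfl⟩
  · intro i hi
    rw [closure_compl, compl_subset_compl]
    refine (hUU (2 * m - (i + 1)) (by omega)).trans ?_
    rw [show 2 * m - (i + 1) + 1 = 2 * m - i by omega]
    exact (hU _ (by omega)).subset_interior_closure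
  · simp [show 2 * m - m = m by omega]

theorem mk_le_cellOdd {𝒰 : Set (Set X)} (h𝒰 : ∀ U ∈ 𝒰, SOpen k U ∧ U.Nonempty)
    (hdisj : 𝒰.PairwiseDisjoint id) : #𝒰 ≤ cellOdd k X :=
  le_sup_of_le_left <| le_ciSup bddAbove_of_small
    (⟨𝒰, h𝒰, fun _ hU _ hV hUV => disjoint_iff_inter_eq_empty.1 (hdisj hU hV hUV)⟩ :
      {𝒰 : Set (Set X) // (∀ U ∈ 𝒰, SOpen k U ∧ U.Nonempty) ∧
        ∀ U ∈ 𝒰, ∀ V ∈ 𝒰, U ≠ V → U ∩ V = ∅})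

theorem aleph0_le_cellOdd : ℵ₀ ≤ cellOdd k X := le_sup_right

variable (X k) in
theorem charOdd_spec : ℵ₀ ≤ charOdd k X ∧ ∀ x : X, ∃ B : Set (Set X), #B ≤ charOdd k X ∧
    (∀ U ∈ B, SOpenNhd k x U) ∧ ∀ U : Set X, SOpenNhd k x U → ∃ V ∈ B, V ⊆ U := by
  refine csInf_mem (s := {c | _ ∧ _}) ⟨max ℵ₀ #(Set X), le_max_left _ _,
    fun x => ⟨{U | SOpenNhd k x U}, (mk_set_le _).trans (le_max_right _ _), fun _ hU => hU,
      fun U hU => ⟨U, hU, subset_rfl⟩⟩⟩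

/-- A maximal disjoint family of S(2k-1)-neighbourhoods `U ⊆ v x` of points `x ∈ S` has at most
`c_{2k-1}(X)` members, and by maximality its centres `T` are S(2k-1)-dense in `S`. -/
theorem exists_subset_mk_le_cellOdd_subset_thetaOdd (hk : 1 ≤ k) {S : Set X} {v : X → Set X}
    (hv : ∀ x ∈ S, SOpenNhd k x (v x)) :
    ∃ T ⊆ S, #T ≤ cellOdd k X ∧ S ⊆ thetaOdd k (⋃ x ∈ T, v x) := by
  obtain ⟨𝒰, h𝒰G, h𝒰disj, h𝒰max⟩ :=
    exists_maximal_pairwiseDisjoint {U | ∃ x ∈ S, SOpenNhd k x U ∧ U ⊆ v x}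
  choose p hpS hpU hpv using fun U : 𝒰 => h𝒰G U.2
  refine ⟨range p, range_subset_iff.2 hpS, mk_range_le.trans (mk_le_cellOdd
    (fun U hU => ⟨⟨(hpU ⟨U, hU⟩).1, _, (hpU ⟨U, hU⟩).2⟩, _, (hpU ⟨U, hU⟩).mem hk⟩) h𝒰disj), ?_⟩
  intro z hz
  by_contra hzθ
  obtain ⟨Q, hQ, hQdisj⟩ := notMem_thetaOdd_iff.1 hzθ
  have hcov : ∀ U ∈ 𝒰, U ⊆ ⋃ x ∈ range p, v x := fun U hU =>
    (hpv ⟨U, hU⟩).trans (subset_biUnion_of_mem (mem_range_self _))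
  have hmem : Q ∩ v z ∈ 𝒰 := h𝒰max _ ⟨z, hz, hQ.inter (hv z hz), inter_subset_right⟩
    fun U hU => hQdisj.mono inter_subset_left (hcov U hU)
  exact disjoint_left.1 hQdisj (hQ.mem hk) (hcov _ hmem ⟨hQ.mem hk, (hv z hz).mem hk⟩)

theorem SSpace.eq_univ_of_forall_cover_eq_univ (hk : 1 ≤ k) (h : SSpace (2 * k - 1) X)
    {κ : Cardinal.{u}} (hκ : ℵ₀ ≤ κ) (hcell : cellOdd k X ≤ κ) {B : X → Set (Set X)}
    (hBκ : ∀ x, #(B x) ≤ κ) (hB : ∀ x, ∀ U ∈ B x, SOpenNhd k x U)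
    (hBbase : ∀ x U, SOpenNhd k x U → ∃ V ∈ B x, V ⊆ U) {H : Set X}
    (hH : ∀ A ⊆ H, #A ≤ κ → ∀ 𝒲 ⊆ 𝒫 (⋃ x ∈ A, B x), #𝒲 ≤ κ →
      H ⊆ ⋃ 𝒱 ∈ 𝒲, thetaOdd k (⋃₀ 𝒱) → ⋃ 𝒱 ∈ 𝒲, thetaOdd k (⋃₀ 𝒱) = Set.univ) :
    H = Set.univ := by
  refine eq_univ_of_forall fun q => by_contra fun hq => ?_
  have hsep : ∀ x ∈ H, ∃ V ∈ B x, ∃ W ∈ B q, Disjoint V W := by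
    intro x hx
    obtain ⟨U, U', hU, hU', hUU'⟩ := h.exists_disjoint_sOpenNhd hk (ne_of_mem_of_not_mem hx hq)
    obtain ⟨V, hV, hVU⟩ := hBbase x U hU
    obtain ⟨W, hW, hWU'⟩ := hBbase q U' hU'
    exact ⟨V, hV, W, hW, hUU'.mono hVU hWU'⟩
  choose! V hV W hW hVW using hsep
  choose T hTH hTc hTθ using fun W₀ : Set X =>
    exists_subset_mk_le_cellOdd_subset_thetaOdd hk (S := {x ∈ H | W x = W₀}) (v := V)
      fun x hx => hB x _ (hV x hx.1)
  have hA : ⋃ W₀ ∈ B q, T W₀ ⊆ H := iUnion₂_subset fun W₀ _ _ hx => (hTH W₀ hx).1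
  have hAκ : #(⋃ W₀ ∈ B q, T W₀ : Set X) ≤ κ := (mk_biUnion_le _ _).trans
    (mul_le_of_le hκ (hBκ q) (ciSup_le' fun W₀ => (hTc W₀).trans hcell))
  have h𝒲 : (fun W₀ => V '' T W₀) '' B q ⊆ 𝒫 (⋃ x ∈ ⋃ W₀ ∈ B q, T W₀, B x) := by
    rintro _ ⟨W₀, hW₀, rfl⟩ _ ⟨x, hx, rfl⟩
    exact mem_biUnion (mem_biUnion hW₀ hx) (hV x (hTH W₀ hx).1)
  have hcover : H ⊆ ⋃ 𝒱 ∈ (fun W₀ => V '' T W₀) '' B q, thetaOdd k (⋃₀ 𝒱) := fun x hx =>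
    mem_biUnion (mem_image_of_mem _ (hW x hx)) (by rw [sUnion_image]; exact hTθ _ ⟨hx, rfl⟩)
  have hqcover : q ∉ ⋃ 𝒱 ∈ (fun W₀ => V '' T W₀) '' B q, thetaOdd k (⋃₀ 𝒱) := by
    intro hq'
    obtain ⟨_, ⟨W₀, hW₀, rfl⟩, hqθ⟩ := mem_iUnion₂.1 hq'
    refine notMem_thetaOdd_iff.2 ⟨W₀, hB q W₀ hW₀, ?_⟩ hqθ
    rw [sUnion_image, disjoint_iUnion₂_right]
    intro x hx
    exact (hTH W₀ hx).2 ▸ (hVW x (hTH W₀ hx).1).symm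
  exact hqcover (hH _ hA hAκ _ h𝒲 (mk_image_le.trans (hBκ q)) hcover ▸ mem_univ q)

end SOdd

theorem stmt6 (k : ℕ) (hk : 1 ≤ k) (X : Type u) [TopologicalSpace X]
    (h : SSpace (2 * k - 1) X) :
    #X ≤ 2 ^ (cellOdd k X * charOdd k X) := by
  obtain ⟨hχ, hbase⟩ := charOdd_spec X k
  choose B hBχ hB hBbase using hbase
  set κ := cellOdd k X * charOdd k X
  have hcell : cellOdd k X ≤ κ := le_mul_right (aleph0_pos.trans_le hχ).ne'
  have hχκ : charOdd k X ≤ κ := le_mul_left (aleph0_pos.trans_le aleph0_le_cellOdd).ne'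
  have hκ : ℵ₀ ≤ κ := aleph0_le_cellOdd.trans hcell
  have hBA : ∀ A : Set X, #A ≤ κ → #(⋃ x ∈ A, B x) ≤ κ := fun A hA =>
    (mk_biUnion_le _ _).trans (mul_le_of_le hκ hA (ciSup_le' fun x => (hBχ x).trans hχκ))
  obtain ⟨H, hHκ, hH⟩ := exists_mk_le_two_power_forall_eq_univ hκ
    (fun A => (fun 𝒲 => ⋃ 𝒱 ∈ 𝒲, thetaOdd k (⋃₀ 𝒱)) '' {𝒲 | 𝒲 ⊆ 𝒫 (⋃ x ∈ A, B x) ∧ #𝒲 ≤ κ})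
    fun A hA => mk_image_le.trans <| mk_bounded_subset_le_two_power hκ <| by
      rw [mk_powerset]; exact power_le_power_left two_ne_zero (hBA A hA)
  have hHuniv := h.eq_univ_of_forall_cover_eq_univ hk hκ hcell (fun x => (hBχ x).trans hχκ) hB
    hBbase fun A hAH hA 𝒲 h𝒲 h𝒲κ => hH A hAH hA _ ⟨𝒲, ⟨h𝒲, h𝒲κ⟩, rfl⟩
  rwa [← mk_univ, ← hHuniv]
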